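/- arXiv:2504.15019 — 2 statements merged into one kernel-verified Lean document; each statement's English description precedes it below -/
import Mathlib

section
/- Let g : ℝ^{s₁+s₂} → ℝ² be given componentwise by gⁱ(v) and suppose the pseudo-gradient map ∇g(v) = col(∇_{v¹}g¹(v), ∇_{v²}g²(v)) has Jacobian G(v) such that G(v) + G(v)ᵀ is positive definite for all v. Then (g¹, g²) is diagonally strictly convex, i.e., for all α ≠ β, (α − β)ᵀ∇g(β) + (β − α)ᵀ∇g(α) < 0. -/
/-! Along the segment t ↦ β + t (α - β), the function t ↦ ⟨∇g(β + t (α - β)), α - β⟩ has derivative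
(α - β)ᵀ G (α - β) > 0, so it is strictly increasing; comparing t = 0 with t = 1 gives
⟨∇g(α) - ∇g(β), α - β⟩ > 0, which is the diagonal strict convexity inequality. -/

open scoped RealInnerProductSpace

theorem strictMono_apply_add_smul_of_fderiv_pos {E F : Type*} [NormedAddCommGroup E] [NormedSpace ℝ E]
    [NormedAddCommGroup F] [NormedSpace ℝ F] {f : E → F} (hf : Differentiable ℝ f)
    (ℓ : F →L[ℝ] ℝ) (x h : E) (hpos : ∀ v, 0 < ℓ (fderiv ℝ f v h)) :
    StrictMono fun t : ℝ => ℓ (f (x + t • h)) := by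
  refine strictMono_of_deriv_pos fun t => ?_
  have hline : HasDerivAt (fun t : ℝ => x + t • h) h t := by
    simpa using ((hasDerivAt_id t).smul_const h).const_add x
  have hderiv : HasDerivAt (fun t : ℝ => ℓ (f (x + t • h))) (ℓ (fderiv ℝ f (x + t • h) h)) t :=
    ℓ.hasFDerivAt.comp_hasDerivAt t ((hf _).hasFDerivAt.comp_hasDerivAt t hline)
  rw [hderiv.deriv]
  exact hpos _

theorem prod_inner_sub_pos_of_fderiv_pos {E₁ E₂ : Type*}
    [NormedAddCommGroup E₁] [InnerProductSpace ℝ E₁] [NormedAddCommGroup E₂] [InnerProductSpace ℝ E₂]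
    {F : E₁ × E₂ → E₁ × E₂} (hF : Differentiable ℝ F)
    (hpos : ∀ v h, h ≠ 0 → 0 < ⟪(fderiv ℝ F v h).1, h.1⟫ + ⟪(fderiv ℝ F v h).2, h.2⟫)
    {α β : E₁ × E₂} (hne : α ≠ β) :
    0 < ⟪(F α - F β).1, (α - β).1⟫ + ⟪(F α - F β).2, (α - β).2⟫ := by
  set h := α - β
  let ℓ : E₁ × E₂ →L[ℝ] ℝ :=
    (innerSL ℝ h.1).comp (.fst ℝ E₁ E₂) + (innerSL ℝ h.2).comp (.snd ℝ E₁ E₂)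
  have hℓ : ∀ w, ℓ w = ⟪w.1, h.1⟫ + ⟪w.2, h.2⟫ := fun w => by
    simp [ℓ, real_inner_comm]
  have key := strictMono_apply_add_smul_of_fderiv_pos hF ℓ β h (fun v => by
    rw [hℓ]; exact hpos v h (sub_ne_zero.mpr hne)) zero_lt_one
  simp only [zero_smul, one_smul, add_zero, hℓ, h, add_sub_cancel] at key
  simp only [Prod.fst_sub, Prod.snd_sub, inner_sub_left]
  linarith

theorem stmt_2_general {s₁ s₂ : ℕ}
    -- the pseudo-gradient map ∇g
    (F : EuclideanSpace ℝ (Fin s₁) × EuclideanSpace ℝ (Fin s₂) →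
         EuclideanSpace ℝ (Fin s₁) × EuclideanSpace ℝ (Fin s₂))
    (hFdiff : Differentiable ℝ F)
    -- G(v) + G(v)ᵀ positive definite: hᵀ G(v) h > 0 for all h ≠ 0
    (hG : ∀ v h, h ≠ 0 →
      0 < ⟪(fderiv ℝ F v h).1, h.1⟫ + ⟪(fderiv ℝ F v h).2, h.2⟫) :
    ∀ α β : EuclideanSpace ℝ (Fin s₁) × EuclideanSpace ℝ (Fin s₂), α ≠ β →
      ⟪α.1 - β.1, (F β).1⟫ + ⟪α.2 - β.2, (F β).2⟫
        + ⟪β.1 - α.1, (F α).1⟫ + ⟪β.2 - α.2, (F α).2⟫ < 0 := by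
  intro α β hne
  have hmono := prod_inner_sub_pos_of_fderiv_pos hFdiff hG hne
  simp only [Prod.fst_sub, Prod.snd_sub, inner_sub_left, inner_sub_right,
    real_inner_comm (F α).1, real_inner_comm (F α).2, real_inner_comm (F β).1,
    real_inner_comm (F β).2] at hmono ⊢
  linarith

theorem stmt_2 {s₁ s₂ : ℕ}
    (g₁ g₂ : EuclideanSpace ℝ (Fin s₁) → EuclideanSpace ℝ (Fin s₂) → ℝ)
    (hg₁ : ContDiff ℝ 2 (fun p : EuclideanSpace ℝ (Fin s₁) × EuclideanSpace ℝ (Fin s₂) =>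
      g₁ p.1 p.2))
    (hg₂ : ContDiff ℝ 2 (fun p : EuclideanSpace ℝ (Fin s₁) × EuclideanSpace ℝ (Fin s₂) =>
      g₂ p.1 p.2))
    -- the pseudo-gradient map ∇g
    (F : EuclideanSpace ℝ (Fin s₁) × EuclideanSpace ℝ (Fin s₂) →
         EuclideanSpace ℝ (Fin s₁) × EuclideanSpace ℝ (Fin s₂))
    (hF : ∀ v, F v = (gradient (fun w => g₁ w v.2) v.1, gradient (fun w => g₂ v.1 w) v.2))
    (hFdiff : Differentiable ℝ F)
    -- G(v) + G(v)ᵀ positive definite: hᵀ G(v) h > 0 for all h ≠ 0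
    (hG : ∀ v h, h ≠ 0 →
      0 < ⟪(fderiv ℝ F v h).1, h.1⟫ + ⟪(fderiv ℝ F v h).2, h.2⟫) :
    ∀ α β : EuclideanSpace ℝ (Fin s₁) × EuclideanSpace ℝ (Fin s₂), α ≠ β →
      ⟪α.1 - β.1, (F β).1⟫ + ⟪α.2 - β.2, (F β).2⟫
        + ⟪β.1 - α.1, (F α).1⟫ + ⟪β.2 - α.2, (F α).2⟫ < 0 :=
  stmt_2_general F hFdiff hG
end

section
/- Let Q, S ∈ ℝ^{n×n} be symmetric, R ∈ ℝ^{m×m} symmetric positive definite, and consider W(x) = min_{u ∈ ℝᵐ} { ½xᵀQx + pᵀx + ½uᵀRu + ½(Ax + Bu)ᵀS(Ax+Bu) + sᵀ(Ax+Bu) + m₀ }, with R + BᵀSB positive definite. Then W is a quadratic function of x: W(x) = ½xᵀS̃x + s̃ᵀx + m̃, where S̃ = Q + (A + BE)ᵀS(A + BE) + EᵀRE, s̃ = p + (A+BE)ᵀ(s + SBF) + EᵀRF, for E = −(R + BᵀSB)^{−1}BᵀSA and F = −(R + BᵀSB)^{−1}Bᵀs, and the unique minimizer is u⋆(x) = Ex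 + F. -/
/-!
Completing the square in `u`: for fixed `x` the cost is `½ uᵀHu + g(x)ᵀu + c(x)` with
`H = R + BᵀSB` and `g(x) = BᵀSAx + Bᵀs`. Since `u⋆ = Ex + F` solves `H u⋆ = -g(x)`, the cost equals
its value at `u⋆` plus `½ (u - u⋆)ᵀH(u - u⋆)`, which is positive for `u ≠ u⋆` as `H` is positive
definite. Substituting any affine law `u = Ex + F` into the cost gives a quadratic in `x` by
direct expansion.
-/

open Matrix

variable {ι κ : Type*} [Fintype ι] [Fintype κ]

section Quadratic

variable {α : Type*} [CommRing α]

theorem dotProduct_mulVec_comm_of_transpose_eq {M : Matrix ι ι α} (hM : Mᵀ = M) (a b : ι → α) :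
    a ⬝ᵥ M *ᵥ b = b ⬝ᵥ M *ᵥ a := by
  simpa only [hM] using dotProduct_transpose_mulVec M a b

theorem add_dotProduct_mulVec_add_of_transpose_eq {M : Matrix ι ι α} (hM : Mᵀ = M)
    (a b : ι → α) :
    (a + b) ⬝ᵥ M *ᵥ (a + b) = a ⬝ᵥ M *ᵥ a + 2 * (b ⬝ᵥ M *ᵥ a) + b ⬝ᵥ M *ᵥ b := by
  rw [mulVec_add, dotProduct_add, add_dotProduct, add_dotProduct,
    dotProduct_mulVec_comm_of_transpose_eq hM a b]
  ring

theorem dotProduct_mulVec_add_two_mul_eq_of_mulVec_eq_neg {H : Matrix ι ι α} (hH : Hᵀ = H)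
    {g u₀ : ι → α} (hu₀ : H *ᵥ u₀ = -g) (u : ι → α) :
    u ⬝ᵥ H *ᵥ u + 2 * (g ⬝ᵥ u)
      = u₀ ⬝ᵥ H *ᵥ u₀ + 2 * (g ⬝ᵥ u₀) + (u - u₀) ⬝ᵥ H *ᵥ (u - u₀) := by
  obtain ⟨d, rfl⟩ : ∃ d, u = u₀ + d := ⟨u - u₀, by abel⟩
  rw [add_sub_cancel_left, add_dotProduct_mulVec_add_of_transpose_eq hH, hu₀]
  simp only [add_dotProduct, dotProduct_neg, dotProduct_comm g]
  ring

theorem mulVec_neg_nonsing_inv_mul_mulVec_add [DecidableEq κ] {H : Matrix κ κ α}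
    (hH : IsUnit H.det) (K : Matrix κ ι α) (b : κ → α) (x : ι → α) :
    H *ᵥ (-(H⁻¹ * K) *ᵥ x + -(H⁻¹ *ᵥ b)) = -(K *ᵥ x + b) := by
  rw [neg_mulVec, ← neg_add, mulVec_neg, ← mulVec_mulVec, ← mulVec_add, mulVec_mulVec,
    mul_nonsing_inv _ hH, one_mulVec]

end Quadratic

section LQ

variable (Q S : Matrix ι ι ℝ) (R : Matrix κ κ ℝ) (A : Matrix ι ι ℝ) (B : Matrix ι κ ℝ)
  (p s : ι → ℝ) (m₀ : ℝ)

noncomputable def lqCost (x : ι → ℝ) (u : κ → ℝ) : ℝ :=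
  (1 / 2) * (x ⬝ᵥ Q *ᵥ x) + p ⬝ᵥ x + (1 / 2) * (u ⬝ᵥ R *ᵥ u)
    + (1 / 2) * ((A *ᵥ x + B *ᵥ u) ⬝ᵥ S *ᵥ (A *ᵥ x + B *ᵥ u)) + s ⬝ᵥ (A *ᵥ x + B *ᵥ u) + m₀

variable {Q S R A B p s m₀}

theorem lqCost_eq_lqCost_zero_add (hS : Sᵀ = S) (x : ι → ℝ) (u : κ → ℝ) :
    lqCost Q S R A B p s m₀ x u = lqCost Q S R A B p s m₀ x 0
      + (1 / 2) * (u ⬝ᵥ (R + Bᵀ * S * B) *ᵥ u) + ((Bᵀ * S * A) *ᵥ x + Bᵀ *ᵥ s) ⬝ᵥ u := by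
  rw [lqCost, lqCost, add_dotProduct_mulVec_add_of_transpose_eq hS, dotProduct_comm _ u]
  simp only [mulVec_zero, add_zero, zero_dotProduct, add_mulVec, ← mulVec_mulVec,
    dotProduct_add, dotProduct_transpose_mulVec]
  rw [dotProduct_comm (S *ᵥ B *ᵥ u), dotProduct_comm (S *ᵥ A *ᵥ x)]
  ring

theorem lqCost_eq_lqCost_add_of_mulVec_eq (hS : Sᵀ = S)
    (hH : (R + Bᵀ * S * B)ᵀ = R + Bᵀ * S * B) {x : ι → ℝ} {u₀ : κ → ℝ}
    (hu₀ : (R + Bᵀ * S * B) *ᵥ u₀ = -((Bᵀ * S * A) *ᵥ x + Bᵀ *ᵥ s)) (u : κ → ℝ) :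
    lqCost Q S R A B p s m₀ x u = lqCost Q S R A B p s m₀ x u₀
      + (1 / 2) * ((u - u₀) ⬝ᵥ (R + Bᵀ * S * B) *ᵥ (u - u₀)) := by
  have hsquare := dotProduct_mulVec_add_two_mul_eq_of_mulVec_eq_neg hH hu₀ u
  rw [lqCost_eq_lqCost_zero_add hS x u, lqCost_eq_lqCost_zero_add hS x u₀]
  linarith

theorem lqCost_lt_of_mulVec_eq (hS : Sᵀ = S) (hH : (R + Bᵀ * S * B).PosDef) {x : ι → ℝ}
    {u₀ : κ → ℝ} (hu₀ : (R + Bᵀ * S * B) *ᵥ u₀ = -((Bᵀ * S * A) *ᵥ x + Bᵀ *ᵥ s)) {u : κ → ℝ}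
    (hu : u ≠ u₀) :
    lqCost Q S R A B p s m₀ x u₀ < lqCost Q S R A B p s m₀ x u := by
  have hpos := hH.dotProduct_mulVec_pos (sub_ne_zero.2 hu)
  rw [star_trivial] at hpos
  rw [lqCost_eq_lqCost_add_of_mulVec_eq hS hH.isHermitian.eq hu₀ u]
  linarith

theorem lqCost_mulVec_add (hS : Sᵀ = S) (hR : Rᵀ = R) (E : Matrix κ ι ℝ) (F : κ → ℝ)
    (x : ι → ℝ) :
    lqCost Q S R A B p s m₀ x (E *ᵥ x + F)
      = (1 / 2) * (x ⬝ᵥ (Q + (A + B * E)ᵀ * S * (A + B * E) + Eᵀ * R * E) *ᵥ x)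
        + (p + (A + B * E)ᵀ *ᵥ (s + S *ᵥ (B *ᵥ F)) + Eᵀ *ᵥ (R *ᵥ F)) ⬝ᵥ x
        + lqCost Q S R A B p s m₀ 0 F := by
  have hAB : A *ᵥ x + B *ᵥ (E *ᵥ x + F) = (A + B * E) *ᵥ x + B *ᵥ F := by
    rw [add_mulVec, mulVec_add, mulVec_mulVec, add_assoc]
  generalize A + B * E = M at hAB ⊢
  rw [lqCost, lqCost, hAB, add_dotProduct_mulVec_add_of_transpose_eq hR,
    add_dotProduct_mulVec_add_of_transpose_eq hS, dotProduct_comm (p + _ + _) x]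
  simp only [mulVec_zero, zero_add, dotProduct_zero, add_mulVec, ← mulVec_mulVec,
    mulVec_add, dotProduct_add, dotProduct_transpose_mulVec]
  rw [dotProduct_comm x p, dotProduct_comm (S *ᵥ M *ᵥ x), dotProduct_comm (R *ᵥ E *ᵥ x),
    dotProduct_comm (S *ᵥ B *ᵥ F), dotProduct_comm (R *ᵥ F),
    dotProduct_mulVec_comm_of_transpose_eq hS (M *ᵥ x) (B *ᵥ F),
    dotProduct_mulVec_comm_of_transpose_eq hR (E *ᵥ x) F]
  ring

end LQ

theorem stmt_16_general {n m : ℕ}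
    (Q S : Matrix (Fin n) (Fin n) ℝ) (R : Matrix (Fin m) (Fin m) ℝ)
    (A : Matrix (Fin n) (Fin n) ℝ) (B : Matrix (Fin n) (Fin m) ℝ)
    (p s : Fin n → ℝ) (m₀ : ℝ)
    (hS : Sᵀ = S) (hR : R.PosDef)
    (hpd : (R + Bᵀ * S * B).PosDef)
    (obj : (Fin n → ℝ) → (Fin m → ℝ) → ℝ)
    (hobj : ∀ x u, obj x u =
      (1 / 2) * (x ⬝ᵥ Q.mulVec x) + p ⬝ᵥ x + (1 / 2) * (u ⬝ᵥ R.mulVec u)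
      + (1 / 2) * ((A.mulVec x + B.mulVec u) ⬝ᵥ S.mulVec (A.mulVec x + B.mulVec u))
      + s ⬝ᵥ (A.mulVec x + B.mulVec u) + m₀)
    (E : Matrix (Fin m) (Fin n) ℝ)
    (hE : E = -((R + Bᵀ * S * B)⁻¹ * (Bᵀ * S * A)))
    (F : Fin m → ℝ)
    (hF : F = -(R + Bᵀ * S * B)⁻¹.mulVec (Bᵀ.mulVec s))
    (Stilde : Matrix (Fin n) (Fin n) ℝ)
    (hStilde : Stilde = Q + (A + B * E)ᵀ * S * (A + B * E) + Eᵀ * R * E)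
    (stilde : Fin n → ℝ)
    (hstilde : stilde = p + (A + B * E)ᵀ.mulVec (s + S.mulVec (B.mulVec F))
      + Eᵀ.mulVec (R.mulVec F)) :
    ∃ mtilde : ℝ, ∀ x : Fin n → ℝ,
      -- the unique minimizer is u⋆(x) = Ex + F …
      (∀ u : Fin m → ℝ, u ≠ E.mulVec x + F → obj x (E.mulVec x + F) < obj x u) ∧
      -- … and the value function is quadratic in x
      obj x (E.mulVec x + F)
        = (1 / 2) * (x ⬝ᵥ Stilde.mulVec x) + stilde ⬝ᵥ x + mtilde := by
  obtain rfl : obj = lqCost Q S R A B p s m₀ := funext₂ hobj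
  have hfeedback (x : Fin n → ℝ) : (R + Bᵀ * S * B) *ᵥ (E *ᵥ x + F)
      = -((Bᵀ * S * A) *ᵥ x + Bᵀ *ᵥ s) := by
    rw [hE, hF]
    exact mulVec_neg_nonsing_inv_mul_mulVec_add ((isUnit_iff_isUnit_det _).mp hpd.isUnit) _ _ x
  refine ⟨lqCost Q S R A B p s m₀ 0 F, fun x =>
    ⟨fun u hu => lqCost_lt_of_mulVec_eq hS hpd (hfeedback x) hu, ?_⟩⟩
  rw [hStilde, hstilde]
  exact lqCost_mulVec_add hS hR.isHermitian.eq E F x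

theorem stmt_16 {n m : ℕ}
    (Q S : Matrix (Fin n) (Fin n) ℝ) (R : Matrix (Fin m) (Fin m) ℝ)
    (A : Matrix (Fin n) (Fin n) ℝ) (B : Matrix (Fin n) (Fin m) ℝ)
    (p s : Fin n → ℝ) (m₀ : ℝ)
    (hQ : Qᵀ = Q) (hS : Sᵀ = S) (hR : R.PosDef)
    (hpd : (R + Bᵀ * S * B).PosDef)
    (obj : (Fin n → ℝ) → (Fin m → ℝ) → ℝ)
    (hobj : ∀ x u, obj x u =
      (1 / 2) * (x ⬝ᵥ Q.mulVec x) + p ⬝ᵥ x + (1 / 2) * (u ⬝ᵥ R.mulVec u)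
      + (1 / 2) * ((A.mulVec x + B.mulVec u) ⬝ᵥ S.mulVec (A.mulVec x + B.mulVec u))
      + s ⬝ᵥ (A.mulVec x + B.mulVec u) + m₀)
    (E : Matrix (Fin m) (Fin n) ℝ)
    (hE : E = -((R + Bᵀ * S * B)⁻¹ * (Bᵀ * S * A)))
    (F : Fin m → ℝ)
    (hF : F = -(R + Bᵀ * S * B)⁻¹.mulVec (Bᵀ.mulVec s))
    (Stilde : Matrix (Fin n) (Fin n) ℝ)
    (hStilde : Stilde = Q + (A + B * E)ᵀ * S * (A + B * E) + Eᵀ * R * E)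
    (stilde : Fin n → ℝ)
    (hstilde : stilde = p + (A + B * E)ᵀ.mulVec (s + S.mulVec (B.mulVec F))
      + Eᵀ.mulVec (R.mulVec F)) :
    ∃ mtilde : ℝ, ∀ x : Fin n → ℝ,
      -- the unique minimizer is u⋆(x) = Ex + F …
      (∀ u : Fin m → ℝ, u ≠ E.mulVec x + F → obj x (E.mulVec x + F) < obj x u) ∧
      -- … and the value function is quadratic in x
      obj x (E.mulVec x + F)
        = (1 / 2) * (x ⬝ᵥ Stilde.mulVec x) + stilde ⬝ᵥ x + mtilde :=
  stmt_16_general Q S R A B p s m₀ hS hR hpd obj hobj E hE F hF Stilde hStilde stilde hstilde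
end
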